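/- (Lemma 3 of the paper.) In the CBwK setting, let b ∈ [0, min B) and let B̃ ∈ ℝ^d satisfy 0 ≤ B̃ < B − b·1 componentwise. If the problem (r,c,B',ν) is feasible for some B' < B̃, then any minimizer λ*_{B−b·1} of λ ↦ L(λ, B−b·1) over λ ∈ [0,∞)^d satisfies ‖λ*_{B−b·1}‖ ≤ ( OPT(r,c,B−b·1) − OPT(r,c,B̃) ) / min( B − b·1 − B̃ ), where ‖·‖ is the Euclidean norm. -/

import Mathlib

/-!
Write `C = B − b·1`. For a policy `π` whose cost is at most `B̃`, weak duality gives
`R(π) + ⟨C − cost(π), λ*⟩ ≤ L(λ*, C)`; every slack `Cᵢ − costᵢ(π)` is at least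
`min(C − B̃)`, and `‖λ*‖ ≤ Σᵢ λ*ᵢ` because `λ* ≥ 0`. Since `λ*` minimizes `L(·, C)`, strong
duality bounds `L(λ*, C)` by `OPT(C)`, and taking the supremum over `π` gives
`OPT(B̃) + min(C − B̃) ‖λ*‖ ≤ OPT(C)`.

Strong duality comes from separating `(OPT(C), C)` from the open convex set of pairs
(reward, cost) that are strictly worse than those of some policy. Slater's condition makes the
reward coefficient of the separating functional positive, and dividing by it gives the
multiplier. The value `L(λ, C)` itself is the Lagrangian of a policy that plays the maximizers
of `r − ⟨c − C, λ⟩`.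
-/

open MeasureTheory Finset

namespace CBwK

variable {X : Type*} [MeasurableSpace X] {A : Type*} [Fintype A] [Nonempty A] {d : ℕ}

/-- A static policy: a measurable map `X → P(A)` with components `(π_a)_{a∈A}`. -/
def IsPolicy (π : X → A → ℝ) : Prop :=
  (∀ x a, 0 ≤ π x a) ∧ (∀ x, ∑ a, π x a = 1) ∧ (∀ a, Measurable fun x => π x a)

/-- Expected reward `E_{X∼ν}[Σ_a r(X,a) π_a(X)]` of a policy. -/
noncomputable def polReward (ν : Measure X) (r : X → A → ℝ) (π : X → A → ℝ) : ℝ :=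
  ∫ x, ∑ a, r x a * π x a ∂ν

/-- Component `i` of the expected cost vector `E_{X∼ν}[Σ_a c(X,a) π_a(X)]` of a policy. -/
noncomputable def polCost (ν : Measure X) (c : X → A → Fin d → ℝ) (π : X → A → ℝ)
    (i : Fin d) : ℝ :=
  ∫ x, ∑ a, c x a i * π x a ∂ν

/-- The problem `(r,c,B',ν)` is feasible. -/
def Feasible (ν : Measure X) (c : X → A → Fin d → ℝ) (B' : Fin d → ℝ) : Prop :=
  ∃ π, IsPolicy π ∧ ∀ i, polCost ν c π i ≤ B' i

/-- `OPT(r,c,B')`: optimal expected reward under the expected-cost constraints `B'`. -/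
noncomputable def OPT (ν : Measure X) (r : X → A → ℝ) (c : X → A → Fin d → ℝ)
    (B' : Fin d → ℝ) : ℝ :=
  sSup {y : ℝ | ∃ π, IsPolicy π ∧ (∀ i, polCost ν c π i ≤ B' i) ∧ y = polReward ν r π}

/-- `L(λ,C) = E_{X∼ν}[ max_a { r(X,a) − ⟨c(X,a) − C, λ⟩ } ]`. -/
noncomputable def L (ν : Measure X) (r : X → A → ℝ) (c : X → A → Fin d → ℝ)
    (lam : Fin d → ℝ) (C : Fin d → ℝ) : ℝ :=
  ∫ x, Finset.univ.sup' Finset.univ_nonempty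
    (fun a => r x a - ∑ i, (c x a i - C i) * lam i) ∂ν

/-- Euclidean norm on `ℝ^d`. -/
noncomputable def enorm (v : Fin d → ℝ) : ℝ := Real.sqrt (∑ i, (v i) ^ 2)

/-- ℓ1-norm on `ℝ^d`. -/
noncomputable def l1norm (v : Fin d → ℝ) : ℝ := ∑ i, |v i|

/-- Smallest component of a vector of `ℝ^d` (junk value `0` if `d = 0`). -/
noncomputable def minComp (v : Fin d → ℝ) : ℝ := ⨅ i, v i

end CBwK

namespace CBwK

open Filter Topology
open scoped Pointwise

lemma le_of_forall_pos_add_mul_lt {a b M : ℝ} (h : ∀ t > 0, a + t * b < M) : a ≤ M := by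
  have hlim : Tendsto (fun t => a + t * b) (𝓝[>] 0) (𝓝 a) := by
    simpa using (tendsto_const_nhds.add (tendsto_id.mul_const b)).mono_left
      (nhdsWithin_le_nhds (a := (0 : ℝ)))
  exact le_of_tendsto hlim (eventually_nhdsWithin_of_forall fun t ht => (h t ht).le)

lemma nonpos_of_forall_pos_add_mul_lt {a b M : ℝ} (h : ∀ t > 0, a + t * b < M) : b ≤ 0 := by
  by_contra! hb
  have := h (|M - a| / b + 1) (by positivity)
  rw [add_mul, div_mul_cancel₀ _ hb.ne'] at this
  linarith [le_abs_self (M - a)]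

lemma _root_.ContinuousLinearMap.apply_prod_eq {ι : Type*} [Fintype ι] [DecidableEq ι]
    (f : ℝ × (ι → ℝ) →L[ℝ] ℝ) (y : ℝ) (z : ι → ℝ) :
    f (y, z) = y * f (1, 0) + ∑ i, z i * f (0, Pi.single i 1) := by
  have hyz : ((y, z) : ℝ × (ι → ℝ)) = y • (1, 0) + ∑ i, z i • ((0 : ℝ), Pi.single i 1) := by
    ext <;> simp [Prod.fst_sum, Prod.snd_sum, Pi.single_apply]
  rw [hyz, map_add, map_smul, map_sum]
  simp only [map_smul, smul_eq_mul]

lemma enorm_le_sum_of_nonneg {d : ℕ} {v : Fin d → ℝ} (hv : ∀ i, 0 ≤ v i) :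
    enorm v ≤ ∑ i, v i := by
  rw [enorm, ← Real.sqrt_sq (Finset.sum_nonneg fun i _ => hv i)]
  exact Real.sqrt_le_sqrt (Finset.sum_sq_le_sq_sum_of_nonneg fun i _ => hv i)

lemma minComp_le {d : ℕ} (v : Fin d → ℝ) (i : Fin d) : minComp v ≤ v i :=
  ciInf_le (Finite.bddBelow_range v) i

lemma minComp_pos {d : ℕ} (hd : 0 < d) {v : Fin d → ℝ} (hv : ∀ i, 0 < v i) :
    0 < minComp v := by
  have : Nonempty (Fin d) := Fin.pos_iff_nonempty.mp hd
  obtain ⟨i, hi⟩ := exists_eq_ciInf_of_finite (f := v)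
  rw [minComp, ← hi]
  exact hv i

variable {X A : Type*} {d : ℕ}

noncomputable def lagrangeGain (r : X → A → ℝ) (c : X → A → Fin d → ℝ) (lam C : Fin d → ℝ)
    (x : X) (a : A) : ℝ :=
  r x a - ∑ i, (c x a i - C i) * lam i

lemma measurable_lagrangeGain [MeasurableSpace X] {r : X → A → ℝ} {c : X → A → Fin d → ℝ}
    (hr : ∀ a, Measurable fun x => r x a) (hc : ∀ a i, Measurable fun x => c x a i)
    (lam C : Fin d → ℝ) (a : A) : Measurable fun x => lagrangeGain r c lam C x a :=
  (hr a).sub (Finset.measurable_sum _ fun i _ => ((hc a i).sub measurable_const).mul_const _)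

lemma integrable_lagrangeGain [MeasurableSpace X] {ν : Measure X} [IsFiniteMeasure ν]
    {r : X → A → ℝ} {c : X → A → Fin d → ℝ}
    (hr : ∀ a, Integrable (fun x => r x a) ν) (hc : ∀ a i, Integrable (fun x => c x a i) ν)
    (lam C : Fin d → ℝ) (a : A) : Integrable (fun x => lagrangeGain r c lam C x a) ν :=
  (hr a).sub (integrable_finsetSum _ fun i _ => ((hc a i).sub (integrable_const _)).mul_const _)

variable [Fintype A]

lemma sum_mul_le_sup' [Nonempty A] {p : A → ℝ} (hp0 : ∀ a, 0 ≤ p a) (hp1 : ∑ a, p a = 1)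
    (g : A → ℝ) : ∑ a, g a * p a ≤ Finset.univ.sup' Finset.univ_nonempty g :=
  calc ∑ a, g a * p a ≤ ∑ a, Finset.univ.sup' Finset.univ_nonempty g * p a :=
        Finset.sum_le_sum fun a _ =>
          mul_le_mul_of_nonneg_right (Finset.le_sup' g (Finset.mem_univ a)) (hp0 a)
    _ = Finset.univ.sup' Finset.univ_nonempty g := by rw [← Finset.mul_sum, hp1, mul_one]

lemma sum_sub_sum_mul_mul_of_sum_eq_one {p : A → ℝ} (hp : ∑ a, p a = 1) (ρ : A → ℝ)
    (κ : A → Fin d → ℝ) (lam C : Fin d → ℝ) :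
    ∑ a, (ρ a - ∑ i, (κ a i - C i) * lam i) * p a
      = ∑ a, ρ a * p a - ∑ i, (∑ a, κ a i * p a - C i) * lam i := by
  have hpt : ∀ a, (ρ a - ∑ i, (κ a i - C i) * lam i) * p a
      = ρ a * p a - ∑ i, (κ a i * p a - C i * p a) * lam i := fun a => by
    rw [sub_mul, Finset.sum_mul]
    congr 1
    exact Finset.sum_congr rfl fun i _ => by ring
  rw [Finset.sum_congr rfl fun a _ => hpt a, Finset.sum_sub_distrib, Finset.sum_comm]
  congr 2
  ext i
  rw [← Finset.sum_mul, Finset.sum_sub_distrib, ← Finset.mul_sum, hp, mul_one]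

section Greedy

variable [Nonempty A]

noncomputable def greedyWeight (g : X → A → ℝ) (x : X) (a : A) : ℝ :=
  if g x a = Finset.univ.sup' Finset.univ_nonempty (g x) then 1 else 0

/-- Uniform over the maximizers of `g x`, which avoids choosing a maximizer measurably. -/
noncomputable def greedyPolicy (g : X → A → ℝ) (x : X) (a : A) : ℝ :=
  greedyWeight g x a / ∑ b, greedyWeight g x b

lemma greedyWeight_nonneg (g : X → A → ℝ) (x : X) (a : A) : 0 ≤ greedyWeight g x a := by
  unfold greedyWeight
  split_ifs <;> norm_num

lemma sum_greedyWeight_pos (g : X → A → ℝ) (x : X) : 0 < ∑ a, greedyWeight g x a := by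
  obtain ⟨a, -, ha⟩ := Finset.exists_mem_eq_sup' Finset.univ_nonempty (g x)
  refine (Finset.sum_pos_iff_of_nonneg fun b _ => greedyWeight_nonneg g x b).2
    ⟨a, Finset.mem_univ a, ?_⟩
  simp [greedyWeight, ha]

lemma sum_mul_greedyPolicy (g : X → A → ℝ) (x : X) :
    ∑ a, g x a * greedyPolicy g x a = Finset.univ.sup' Finset.univ_nonempty (g x) := by
  have hpt : ∀ a, g x a * greedyWeight g x a
      = Finset.univ.sup' Finset.univ_nonempty (g x) * greedyWeight g x a := fun a => by
    unfold greedyWeight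
    split_ifs with h <;> simp [h]
  simp_rw [greedyPolicy, mul_div_assoc', hpt, ← Finset.sum_div, ← Finset.mul_sum]
  exact mul_div_cancel_right₀ _ (sum_greedyWeight_pos g x).ne'

end Greedy

variable [MeasurableSpace X]

lemma IsPolicy.le_one {π : X → A → ℝ} (hπ : IsPolicy π) (x : X) (a : A) : π x a ≤ 1 :=
  (hπ.2.1 x).le.trans' <| Finset.single_le_sum (fun b _ => hπ.1 x b) (Finset.mem_univ a)

lemma IsPolicy.smul_add_smul {π₁ π₂ : X → A → ℝ} (h₁ : IsPolicy π₁) (h₂ : IsPolicy π₂)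
    {s t : ℝ} (hs : 0 ≤ s) (ht : 0 ≤ t) (hst : s + t = 1) : IsPolicy (s • π₁ + t • π₂) :=
  ⟨fun x a => add_nonneg (mul_nonneg hs (h₁.1 x a)) (mul_nonneg ht (h₂.1 x a)),
   fun x => by
     simp only [Pi.add_apply, Pi.smul_apply, smul_eq_mul, Finset.sum_add_distrib,
       ← Finset.mul_sum, h₁.2.1, h₂.2.1, mul_one, hst],
   fun a => ((h₁.2.2 a).const_mul s).add ((h₂.2.2 a).const_mul t)⟩

lemma isPolicy_greedyPolicy [Nonempty A] {g : X → A → ℝ}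
    (hg : ∀ a, Measurable fun x => g x a) : IsPolicy (greedyPolicy g) := by
  have hsup : Measurable fun x => Finset.univ.sup' Finset.univ_nonempty (g x) := by
    convert Finset.measurable_sup' Finset.univ_nonempty fun a _ => hg a using 1
    exact funext fun x => (Finset.sup'_apply _ (fun a x => g x a) x).symm
  have hw : ∀ a, Measurable fun x => greedyWeight g x a := fun a =>
    Measurable.ite (measurableSet_eq_fun (hg a) hsup) measurable_const measurable_const
  refine ⟨fun x a => div_nonneg (greedyWeight_nonneg g x a) (sum_greedyWeight_pos g x).le,
    fun x => ?_, fun a => (hw a).div (Finset.measurable_sum _ fun b _ => hw b)⟩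
  simp_rw [greedyPolicy, ← Finset.sum_div, div_self (sum_greedyWeight_pos g x).ne']

variable {ν : Measure X}

lemma IsPolicy.integrable_sum_mul {π : X → A → ℝ} (hπ : IsPolicy π) {h : X → A → ℝ}
    (hh : ∀ a, Integrable (fun x => h x a) ν) : Integrable (fun x => ∑ a, h x a * π x a) ν :=
  integrable_finsetSum _ fun a _ => (hh a).mul_bdd (hπ.2.2 a).aestronglyMeasurable
    (ae_of_all _ fun x => by
      rw [Real.norm_of_nonneg (hπ.1 x a)]
      exact hπ.le_one x a)

lemma integral_sum_mul_smul_add_smul {h : X → A → ℝ} (hh : ∀ a, Integrable (fun x => h x a) ν)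
    {π₁ π₂ : X → A → ℝ} (h₁ : IsPolicy π₁) (h₂ : IsPolicy π₂) (s t : ℝ) :
    ∫ x, ∑ a, h x a * (s • π₁ + t • π₂) x a ∂ν
      = s * ∫ x, ∑ a, h x a * π₁ x a ∂ν + t * ∫ x, ∑ a, h x a * π₂ x a ∂ν := by
  have hpt : ∀ x, ∑ a, h x a * (s • π₁ + t • π₂) x a
      = s * ∑ a, h x a * π₁ x a + t * ∑ a, h x a * π₂ x a := fun x => by
    simp only [Pi.add_apply, Pi.smul_apply, smul_eq_mul, Finset.mul_sum,
      ← Finset.sum_add_distrib]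
    exact Finset.sum_congr rfl fun a _ => by ring
  simp_rw [hpt]
  rw [integral_add ((h₁.integrable_sum_mul hh).const_mul s)
      ((h₂.integrable_sum_mul hh).const_mul t), integral_const_mul, integral_const_mul]

lemma polReward_le_sum_integral_abs {r : X → A → ℝ} (hr : ∀ a, Integrable (fun x => r x a) ν)
    {π : X → A → ℝ} (hπ : IsPolicy π) : polReward ν r π ≤ ∑ a, ∫ x, |r x a| ∂ν := by
  rw [← integral_finsetSum _ fun a _ => (hr a).abs]
  refine integral_mono (hπ.integrable_sum_mul hr) (integrable_finsetSum _ fun a _ => (hr a).abs)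
    fun x => Finset.sum_le_sum fun a _ => ?_
  calc r x a * π x a ≤ |r x a| * π x a := mul_le_mul_of_nonneg_right (le_abs_self _) (hπ.1 x a)
    _ ≤ |r x a| := mul_le_of_le_one_right (abs_nonneg _) (hπ.le_one x a)

lemma polReward_le_OPT {r : X → A → ℝ} (hr : ∀ a, Integrable (fun x => r x a) ν)
    (c : X → A → Fin d → ℝ) {C : Fin d → ℝ} {π : X → A → ℝ} (hπ : IsPolicy π)
    (hcost : ∀ i, polCost ν c π i ≤ C i) : polReward ν r π ≤ OPT ν r c C :=
  le_csSup ⟨_, by rintro _ ⟨π, hπ, -, rfl⟩; exact polReward_le_sum_integral_abs hr hπ⟩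
    ⟨π, hπ, hcost, rfl⟩

noncomputable def polLagrangian (ν : Measure X) (r : X → A → ℝ) (c : X → A → Fin d → ℝ)
    (π : X → A → ℝ) (lam C : Fin d → ℝ) : ℝ :=
  polReward ν r π - ∑ i, (polCost ν c π i - C i) * lam i

lemma polLagrangian_eq_integral [IsProbabilityMeasure ν] {r : X → A → ℝ}
    {c : X → A → Fin d → ℝ} (hr : ∀ a, Integrable (fun x => r x a) ν)
    (hc : ∀ a i, Integrable (fun x => c x a i) ν) {π : X → A → ℝ} (hπ : IsPolicy π)
    (lam C : Fin d → ℝ) :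
    polLagrangian ν r c π lam C = ∫ x, ∑ a, lagrangeGain r c lam C x a * π x a ∂ν := by
  have hci : ∀ i, Integrable (fun x => ∑ a, c x a i * π x a) ν :=
    fun i => hπ.integrable_sum_mul fun a => hc a i
  have hterm : ∀ i, Integrable (fun x => (∑ a, c x a i * π x a - C i) * lam i) ν :=
    fun i => ((hci i).sub (integrable_const (C i))).mul_const (lam i)
  simp_rw [lagrangeGain, sum_sub_sum_mul_mul_of_sum_eq_one (hπ.2.1 _)]
  rw [integral_sub (hπ.integrable_sum_mul hr) (integrable_finsetSum _ fun i _ => hterm i),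
    integral_finsetSum _ fun i _ => hterm i]
  simp_rw [integral_mul_const, integral_sub (hci _) (integrable_const _), integral_const,
    probReal_univ, one_smul]
  rfl

section Lagrangian

variable [Nonempty A] [IsProbabilityMeasure ν] {r : X → A → ℝ} {c : X → A → Fin d → ℝ}

lemma L_eq_polLagrangian_greedyPolicy (hrm : ∀ a, Measurable fun x => r x a)
    (hcm : ∀ a i, Measurable fun x => c x a i) (hri : ∀ a, Integrable (fun x => r x a) ν)
    (hci : ∀ a i, Integrable (fun x => c x a i) ν) (lam C : Fin d → ℝ) :
    L ν r c lam C = polLagrangian ν r c (greedyPolicy (lagrangeGain r c lam C)) lam C := by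
  rw [polLagrangian_eq_integral hri hci
    (isPolicy_greedyPolicy (measurable_lagrangeGain hrm hcm lam C))]
  simp_rw [sum_mul_greedyPolicy]
  rfl

lemma polLagrangian_le_L (hrm : ∀ a, Measurable fun x => r x a)
    (hcm : ∀ a i, Measurable fun x => c x a i) (hri : ∀ a, Integrable (fun x => r x a) ν)
    (hci : ∀ a i, Integrable (fun x => c x a i) ν) {π : X → A → ℝ} (hπ : IsPolicy π)
    (lam C : Fin d → ℝ) : polLagrangian ν r c π lam C ≤ L ν r c lam C := by
  have hg := isPolicy_greedyPolicy (measurable_lagrangeGain hrm hcm lam C)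
  have hgain := integrable_lagrangeGain hri hci lam C
  rw [L_eq_polLagrangian_greedyPolicy hrm hcm hri hci, polLagrangian_eq_integral hri hci hπ,
    polLagrangian_eq_integral hri hci hg]
  refine integral_mono (hπ.integrable_sum_mul hgain) (hg.integrable_sum_mul hgain) fun x => ?_
  rw [sum_mul_greedyPolicy]
  exact sum_mul_le_sup' (hπ.1 x) (hπ.2.1 x) _

end Lagrangian

noncomputable def outcomeSet (ν : Measure X) (r : X → A → ℝ) (c : X → A → Fin d → ℝ) :
    Set (ℝ × (Fin d → ℝ)) :=
  (fun π => (polReward ν r π, polCost ν c π)) '' {π | IsPolicy π}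

lemma convex_outcomeSet {r : X → A → ℝ} {c : X → A → Fin d → ℝ}
    (hr : ∀ a, Integrable (fun x => r x a) ν) (hc : ∀ a i, Integrable (fun x => c x a i) ν) :
    Convex ℝ (outcomeSet ν r c) := by
  rintro _ ⟨π₁, h₁, rfl⟩ _ ⟨π₂, h₂, rfl⟩ s t hs ht hst
  refine ⟨s • π₁ + t • π₂, h₁.smul_add_smul h₂ hs ht hst, Prod.ext ?_ (funext fun i => ?_)⟩
  · exact integral_sum_mul_smul_add_smul hr h₁ h₂ s t
  · exact integral_sum_mul_smul_add_smul (fun a => hc a i) h₁ h₂ s t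

lemma OPT_prod_notMem_outcomeSet_add {r : X → A → ℝ} (hr : ∀ a, Integrable (fun x => r x a) ν)
    (c : X → A → Fin d → ℝ) (C : Fin d → ℝ) :
    (OPT ν r c C, C) ∉
      outcomeSet ν r c + Set.Iio (0 : ℝ) ×ˢ Set.univ.pi fun _ : Fin d => Set.Ioi (0 : ℝ) := by
  rintro ⟨_, ⟨π, hπ, rfl⟩, ⟨y, z⟩, ⟨hy, hz⟩, hsum⟩
  simp only [Prod.mk_add_mk, Prod.mk.injEq, funext_iff, Pi.add_apply] at hsum
  have hR := polReward_le_OPT hr c (C := C) hπ fun i => by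
    linarith [hsum.2 i, Set.mem_Ioi.1 (Set.mem_univ_pi.1 hz i)]
  linarith [hsum.1, Set.mem_Iio.1 hy]

lemma exists_separating_coefficients {r : X → A → ℝ} {c : X → A → Fin d → ℝ}
    (hr : ∀ a, Integrable (fun x => r x a) ν) (hc : ∀ a i, Integrable (fun x => c x a i) ν)
    {C : Fin d → ℝ} (hslater : ∃ π, IsPolicy π ∧ ∀ i, polCost ν c π i < C i) :
    ∃ (α : ℝ) (β : Fin d → ℝ), 0 < α ∧ (∀ i, β i ≤ 0) ∧ ∀ π, IsPolicy π →
      polReward ν r π * α + ∑ i, polCost ν c π i * β i ≤ OPT ν r c C * α + ∑ i, C i * β i := by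
  obtain ⟨π₀, hπ₀, hπ₀C⟩ := hslater
  obtain ⟨f, hf⟩ := geometric_hahn_banach_open_point
    ((convex_outcomeSet hr hc).add ((convex_Iio 0).prod (convex_pi fun _ _ => convex_Ioi 0)))
    ((isOpen_Iio.prod (isOpen_set_pi Set.finite_univ fun _ _ => isOpen_Ioi)).add_left)
    (OPT_prod_notMem_outcomeSet_add hr c C)
  set α := f (1, 0)
  set β : Fin d → ℝ := fun i => f (0, Pi.single i 1)
  have hsep : ∀ π, IsPolicy π → ∀ s > 0, ∀ w : Fin d → ℝ, (∀ i, 0 < w i) →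
      (polReward ν r π - s) * α + ∑ i, (polCost ν c π i + w i) * β i
        < OPT ν r c C * α + ∑ i, C i * β i := by
    intro π hπ s hs w hw
    rw [← f.apply_prod_eq, ← f.apply_prod_eq]
    refine hf _ ⟨_, ⟨π, hπ, rfl⟩, (-s, w), ⟨neg_neg_of_pos hs, fun i _ => hw i⟩, ?_⟩
    ext <;> simp [sub_eq_add_neg]
  refine ⟨α, β, ?_, fun j => ?_, fun π hπ => ?_⟩
  · have h := hsep π₀ hπ₀ 1 one_pos (fun i => C i - polCost ν c π₀ i) fun i => sub_pos.2 (hπ₀C i)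
    have hR := polReward_le_OPT hr c hπ₀ fun i => (hπ₀C i).le
    simp only [add_sub_cancel] at h
    nlinarith
  · refine nonpos_of_forall_pos_add_mul_lt
      (a := (polReward ν r π₀ - 1) * α + ∑ i, polCost ν c π₀ i * β i + ∑ i, β i)
      (M := OPT ν r c C * α + ∑ i, C i * β i) fun t ht => ?_
    have h := hsep π₀ hπ₀ 1 one_pos (1 + t • Pi.single j 1) fun i => by
      simp only [Pi.add_apply, Pi.one_apply, Pi.smul_apply, smul_eq_mul, Pi.single_apply]
      split_ifs <;> linarith
    simp only [Pi.add_apply, Pi.one_apply, Pi.smul_apply, smul_eq_mul, ← add_assoc, add_mul,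
      Finset.sum_add_distrib, mul_assoc, ← Finset.mul_sum, Pi.single_apply, ite_mul, one_mul,
      zero_mul, Finset.sum_ite_eq', Finset.mem_univ, if_true] at h
    linarith
  · refine le_of_forall_pos_add_mul_lt (b := ∑ i, β i - α) fun t ht => ?_
    have h := hsep π hπ t ht (fun _ => t) fun _ => ht
    simp only [add_mul, Finset.sum_add_distrib, ← Finset.mul_sum] at h
    linarith

theorem exists_nonneg_polLagrangian_le_OPT {r : X → A → ℝ} {c : X → A → Fin d → ℝ}
    (hr : ∀ a, Integrable (fun x => r x a) ν) (hc : ∀ a i, Integrable (fun x => c x a i) ν)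
    {C : Fin d → ℝ} (hslater : ∃ π, IsPolicy π ∧ ∀ i, polCost ν c π i < C i) :
    ∃ lam : Fin d → ℝ, (∀ i, 0 ≤ lam i) ∧
      ∀ π, IsPolicy π → polLagrangian ν r c π lam C ≤ OPT ν r c C := by
  obtain ⟨α, β, hα, hβ, hsep⟩ := exists_separating_coefficients hr hc hslater
  refine ⟨fun i => -β i / α, fun i => div_nonneg (neg_nonneg.2 (hβ i)) hα.le, fun π hπ => ?_⟩
  have hscaled : polLagrangian ν r c π (fun i => -β i / α) C * α
      = polReward ν r π * α + ∑ i, polCost ν c π i * β i - ∑ i, C i * β i := by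
    have hterm : ∀ i, (polCost ν c π i - C i) * (-β i / α) * α
        = C i * β i - polCost ν c π i * β i := fun i => by
      field_simp
      ring
    rw [polLagrangian, sub_mul, Finset.sum_mul, Finset.sum_congr rfl fun i _ => hterm i,
      Finset.sum_sub_distrib]
    ring
  exact le_of_mul_le_mul_right (by linarith [hsep π hπ]) hα

theorem exists_nonneg_L_le_OPT [Nonempty A] [IsProbabilityMeasure ν] {r : X → A → ℝ}
    {c : X → A → Fin d → ℝ} (hrm : ∀ a, Measurable fun x => r x a)
    (hcm : ∀ a i, Measurable fun x => c x a i) (hri : ∀ a, Integrable (fun x => r x a) ν)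
    (hci : ∀ a i, Integrable (fun x => c x a i) ν) {C : Fin d → ℝ}
    (hslater : ∃ π, IsPolicy π ∧ ∀ i, polCost ν c π i < C i) :
    ∃ lam : Fin d → ℝ, (∀ i, 0 ≤ lam i) ∧ L ν r c lam C ≤ OPT ν r c C := by
  obtain ⟨lam, hlam0, hlam⟩ := exists_nonneg_polLagrangian_le_OPT hri hci hslater
  refine ⟨lam, hlam0, ?_⟩
  rw [L_eq_polLagrangian_greedyPolicy hrm hcm hri hci]
  exact hlam _ (isPolicy_greedyPolicy (measurable_lagrangeGain hrm hcm lam C))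

theorem dual_norm_bound_general
    {X : Type*} [MeasurableSpace X] (ν : Measure X) [IsProbabilityMeasure ν]
    {A : Type*} [Fintype A] [Nonempty A] {d : ℕ} (hd : 0 < d)
    (r : X → A → ℝ) (c : X → A → Fin d → ℝ) (B : Fin d → ℝ) (b : ℝ) (Bt : Fin d → ℝ)
    (hr : ∀ x a, r x a ∈ Set.Icc (0 : ℝ) 1)
    (hc : ∀ x a i, c x a i ∈ Set.Icc (-1 : ℝ) 1)
    (hrm : ∀ a, Measurable fun x => r x a)
    (hcm : ∀ a i, Measurable fun x => c x a i)
    (hBt : ∀ i, Bt i < B i - b)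
    (hfeas : ∃ B' : Fin d → ℝ, (∀ i, B' i < Bt i) ∧ Feasible ν c B')
    (lamstar : Fin d → ℝ) (hls0 : ∀ i, 0 ≤ lamstar i)
    (hmin : ∀ lam : Fin d → ℝ, (∀ i, 0 ≤ lam i) →
      L ν r c lamstar (fun i => B i - b) ≤ L ν r c lam (fun i => B i - b)) :
    enorm lamstar ≤
      (OPT ν r c (fun i => B i - b) - OPT ν r c Bt) / minComp (fun i => B i - b - Bt i) := by
  have hri : ∀ a, Integrable (fun x => r x a) ν := fun a =>
    .of_mem_Icc 0 1 (hrm a).aemeasurable (ae_of_all _ fun x => hr x a)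
  have hci : ∀ a i, Integrable (fun x => c x a i) ν := fun a i =>
    .of_mem_Icc (-1) 1 (hcm a i).aemeasurable (ae_of_all _ fun x => hc x a i)
  obtain ⟨B', hB'Bt, π₀, hπ₀, hπ₀B'⟩ := hfeas
  obtain ⟨lam, hlam0, hlam⟩ := exists_nonneg_L_le_OPT hrm hcm hri hci
    ⟨π₀, hπ₀, fun i => (hπ₀B' i).trans_lt ((hB'Bt i).trans (hBt i))⟩
  set m := minComp fun i => B i - b - Bt i
  have hm : 0 < m := minComp_pos hd fun i => sub_pos.2 (hBt i)
  have hOPT : OPT ν r c Bt ≤ OPT ν r c (fun i => B i - b) - m * ∑ i, lamstar i := by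
    refine csSup_le ⟨_, π₀, hπ₀, fun i => (hπ₀B' i).trans (hB'Bt i).le, rfl⟩ ?_
    rintro _ ⟨π, hπ, hcost, rfl⟩
    have hslack : m * ∑ i, lamstar i ≤ -∑ i, (polCost ν c π i - (B i - b)) * lamstar i := by
      rw [Finset.mul_sum, ← Finset.sum_neg_distrib]
      refine Finset.sum_le_sum fun i _ => ?_
      nlinarith [minComp_le (fun i => B i - b - Bt i) i, hcost i, hls0 i]
    have hL := (polLagrangian_le_L hrm hcm hri hci hπ lamstar _).trans
      ((hmin lam hlam0).trans hlam)
    rw [polLagrangian] at hL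
    linarith
  rw [le_div_iff₀ hm]
  nlinarith [enorm_le_sum_of_nonneg hls0]

/-- Lemma 3 of the paper: bound on the norm of the optimal dual variable.
If `0 ≤ b < min B`, `0 ≤ B̃ < B − b·1`, and the problem is feasible for some `B' < B̃`,
then any minimizer `λ*_{B−b·1}` of `λ ↦ L(λ, B−b·1)` over `λ ≥ 0` satisfies
`‖λ*_{B−b·1}‖ ≤ (OPT(r,c,B−b·1) − OPT(r,c,B̃)) / min(B − b·1 − B̃)`. -/
theorem dual_norm_bound
    {X : Type*} [MeasurableSpace X] (ν : Measure X) [IsProbabilityMeasure ν]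
    {A : Type*} [Fintype A] [Nonempty A] {d : ℕ} (hd : 0 < d)
    (r : X → A → ℝ) (c : X → A → Fin d → ℝ) (B : Fin d → ℝ) (b : ℝ) (Bt : Fin d → ℝ)
    (hr : ∀ x a, r x a ∈ Set.Icc (0 : ℝ) 1)
    (hc : ∀ x a i, c x a i ∈ Set.Icc (-1 : ℝ) 1)
    (hrm : ∀ a, Measurable fun x => r x a)
    (hcm : ∀ a i, Measurable fun x => c x a i)
    (hb0 : 0 ≤ b) (hb : b < minComp B)
    (hBt0 : ∀ i, 0 ≤ Bt i) (hBt : ∀ i, Bt i < B i - b)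
    (hfeas : ∃ B' : Fin d → ℝ, (∀ i, B' i < Bt i) ∧ Feasible ν c B')
    (lamstar : Fin d → ℝ) (hls0 : ∀ i, 0 ≤ lamstar i)
    (hmin : ∀ lam : Fin d → ℝ, (∀ i, 0 ≤ lam i) →
      L ν r c lamstar (fun i => B i - b) ≤ L ν r c lam (fun i => B i - b)) :
    enorm lamstar ≤
      (OPT ν r c (fun i => B i - b) - OPT ν r c Bt) / minComp (fun i => B i - b - Bt i) :=
  dual_norm_bound_general ν hd r c B b Bt hr hc hrm hcm hBt hfeas lamstar hls0 hmin

end CBwK
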